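/- Define z(ζ) = hm(ζ;γ_E) + i·hm(ζ;γ_N) − hm(ζ;γ_W) − i·hm(ζ;γ_S) and ϑ(ζ) = (√2/2)(hm(ζ;γ_E) − hm(ζ;γ_N) + hm(ζ;γ_W) − hm(ζ;γ_S)) for ζ in the unit disc, where γ_E = (e^{−iπ/4},e^{iπ/4}), γ_N = (e^{iπ/4},e^{3iπ/4}), γ_W = (e^{3iπ/4},e^{5iπ/4}), γ_S = (e^{5iπ/4},e^{7iπ/4}) are the four boundary arcs. Then the conformality relation (∂_ζ z)(∂_ζ z̄) = (∂_ζ ϑ)² holds for all ζ ∈ 𝔻. -/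

import Mathlib

open Complex Metric

/-- The four angles `π/4 + m·π/2`, `m = 0,1,2,3`, separating the boundary arcs
`γ_E, γ_N, γ_W, γ_S` of the unit circle. -/
noncomputable def arcAngle (m : Fin 4) : ℝ := Real.pi / 4 + (m : ℕ) * (Real.pi / 2)

/-- Wirtinger derivative `∂_ζ h = ½(∂_{Re ζ} − i∂_{Im ζ})h`. -/
noncomputable def wirt (h : ℂ → ℂ) (ζ : ℂ) : ℂ :=
  (1/2) * (deriv (fun s : ℝ => h (ζ + s)) 0 - I * deriv (fun s : ℝ => h (ζ + s * I)) 0)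

/-! The branch `a m` is pinned down by continuity and its value at `0`: on the disc,
`a m ζ = θ_m + arg (1 - ζ / e^{iθ_m})`. So every harmonic measure is, up to a constant,
`1/π` times the imaginary part of a combination of the holomorphic functions
`log (1 - ζ / p_m)`, `p_m = e^{iθ_m} = i^m ω` with `ω = e^{iπ/4}`, and
`∂_ζ (Im f) = -(i/2) f'` turns all three Wirtinger derivatives into combinations of
`d_m = (ζ - p_m)⁻¹`. With `X = d₀ - d₂` and `Y = d₁ - d₃` the relation reduces to
`X² + Y² = (d₀ - d₁ + d₂ - d₃)²`, a rational identity in `ζ` and `ω` that only uses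
`(iω)² = -ω²`. -/

open Filter Topology
open scoped Real

theorem IsPreconnected.eqOn_of_exp_mul_I_eq {α : Type*} [TopologicalSpace α] {U : Set α}
    (hU : IsPreconnected U) {f g : α → ℝ} (hf : ContinuousOn f U) (hg : ContinuousOn g U)
    (hfg : ∀ x ∈ U, exp (f x * I) = exp (g x * I)) {x₀ : α} (hx₀ : x₀ ∈ U)
    (h₀ : f x₀ = g x₀) : Set.EqOn f g U := by
  have hmaps : Set.MapsTo (f - g) U (AddSubgroup.zmultiples (2 * π)) := by
    intro x hx
    obtain ⟨n, hn⟩ := exp_eq_exp_iff_exists_int.mp (hfg x hx)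
    refine AddSubgroup.mem_zmultiples_iff.mpr ⟨n, ?_⟩
    have : ((f x - g x : ℝ) : ℂ) = ((n * (2 * π) : ℝ) : ℂ) := by
      apply mul_right_cancel₀ I_ne_zero
      push_cast
      linear_combination hn
    simpa [zsmul_eq_mul] using (ofReal_injective this).symm
  intro x hx
  have := hU.constant_of_mapsTo (SetLike.isDiscrete_iff_discreteTopology.mpr inferInstance)
    (hf.sub hg) hmaps hx hx₀
  simpa only [Pi.sub_apply, h₀, sub_self, sub_eq_zero] using this

theorem one_sub_div_mem_slitPlane {w p : ℂ} (hw : ‖w‖ < ‖p‖) :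
    1 - w / p ∈ slitPlane := by
  have hp : p ≠ 0 := norm_pos_iff.mp ((norm_nonneg w).trans_lt hw)
  rw [sub_eq_add_neg]
  apply mem_slitPlane_of_norm_lt_one
  rwa [norm_neg, norm_div, div_lt_one (norm_pos_iff.mpr hp)]

theorem eqOn_add_arg_one_sub_div {θ : ℝ} {a : ℂ → ℝ} (hcont : ContinuousOn a (ball 0 1))
    (harg : ∀ ζ ∈ ball (0:ℂ) 1,
      (‖exp (θ * I) - ζ‖ : ℂ) * exp (a ζ * I) = exp (θ * I) - ζ)
    (h0 : a 0 = θ) :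
    Set.EqOn a (fun ζ => θ + arg (1 - ζ / exp (θ * I))) (ball 0 1) := by
  have hslit : ∀ ζ ∈ ball (0:ℂ) 1, 1 - ζ / exp (θ * I) ∈ slitPlane := fun ζ hζ =>
    one_sub_div_mem_slitPlane (by simpa [norm_exp_ofReal_mul_I] using hζ)
  refine (convex_ball (0:ℂ) 1).isPreconnected.eqOn_of_exp_mul_I_eq hcont ?_ ?_
    (mem_ball_self one_pos) (by simp [h0])
  · exact continuousOn_const.add fun ζ hζ =>
      ((continuousAt_arg (hslit ζ hζ)).comp (f := fun w => 1 - w / exp (θ * I))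
        (by fun_prop)).continuousWithinAt
  · intro ζ hζ
    set v := 1 - ζ / exp (θ * I)
    have hv : exp (θ * I) - ζ = exp (θ * I) * v := by
      simp only [v]; field_simp
    have hnorm : (‖v‖ : ℂ) ≠ 0 := by
      simpa using slitPlane_ne_zero (hslit ζ hζ)
    apply mul_left_cancel₀ hnorm
    rw [ofReal_add, add_mul, exp_add, mul_left_comm, norm_mul_exp_arg_mul_I, ← hv,
      ← harg ζ hζ, hv, norm_mul, norm_exp_ofReal_mul_I, one_mul]

section Wirtinger

variable {ζ : ℂ}

theorem HasDerivAt.comp_ofReal_line {g : ℂ → ℂ} {d : ℂ} (v : ℂ) (hg : HasDerivAt g d ζ) :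
    HasDerivAt (fun s : ℝ => g (ζ + s * v)) (d * v) 0 := by
  have hline : HasDerivAt (fun w : ℂ => ζ + w * v) v 0 := by
    simpa using ((hasDerivAt_id (0:ℂ)).mul_const v).const_add ζ
  simpa [mul_comm v d] using ((hg.scomp_of_eq (0:ℂ) hline (by simp))).comp_ofReal (z := 0)

theorem Filter.EventuallyEq.wirt_eq {h H : ℂ → ℂ} (hev : h =ᶠ[𝓝 ζ] H) :
    wirt h ζ = wirt H ζ := by
  have hline : ∀ v : ℂ,
      (fun s : ℝ => h (ζ + s * v)) =ᶠ[𝓝 0] fun s : ℝ => H (ζ + s * v) :=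
    fun v => hev.comp_tendsto (by simpa using (Continuous.tendsto (by fun_prop) (0:ℝ) :
      Tendsto (fun s : ℝ => ζ + s * v) (𝓝 0) (𝓝 (ζ + (0:ℝ) * v))))
  simpa [wirt] using congrArg₂ (fun x y => (1/2 : ℂ) * (x - I * y))
    (hline 1).deriv_eq (hline I).deriv_eq

theorem wirt_sum_ofReal_im {ι : Type*} (s : Finset ι) (κ : ι → ℂ) {g : ι → ℂ → ℂ}
    {d : ι → ℂ} (hg : ∀ i ∈ s, HasDerivAt (g i) (d i) ζ) :
    wirt (fun w => ∑ i ∈ s, κ i * ((g i w).im : ℂ)) ζ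
      = -(I / 2) * ∑ i ∈ s, κ i * d i := by
  have hline : ∀ v : ℂ,
      HasDerivAt (fun t : ℝ => ∑ i ∈ s, κ i * ((g i (ζ + t * v)).im : ℂ))
        (∑ i ∈ s, κ i * ((d i * v).im : ℂ)) 0 := fun v =>
    HasDerivAt.fun_sum fun i hi =>
      ((imCLM.hasFDerivAt.comp_hasDerivAt _
        ((hg i hi).comp_ofReal_line v)).ofReal_comp).const_mul (κ i)
  have hline_one := hline 1
  simp only [mul_one] at hline_one
  rw [wirt, hline_one.deriv, (hline I).deriv, Finset.mul_sum, Finset.mul_sum,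
    ← Finset.sum_sub_distrib, Finset.mul_sum]
  refine Finset.sum_congr rfl fun i _ => ?_
  rw [mul_I_im]
  linear_combination (-(I / 2) * κ i) * re_add_im (d i) + (κ i * (d i).im / 2) * I_sq

end Wirtinger

theorem hasDerivAt_log_one_sub_div {p ζ : ℂ} (hζ : ‖ζ‖ < ‖p‖) :
    HasDerivAt (fun w => log (1 - w / p)) (ζ - p)⁻¹ ζ := by
  have hp : p ≠ 0 := norm_pos_iff.mp ((norm_nonneg ζ).trans_lt hζ)
  have hpζ : p - ζ ≠ 0 := sub_ne_zero.mpr fun h => (h ▸ hζ).false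
  have hline : HasDerivAt (fun w => 1 - w / p) (-(1 / p)) ζ := by
    simpa using ((hasDerivAt_id ζ).div_const p).const_sub 1
  convert hline.clog (one_sub_div_mem_slitPlane hζ) using 1
  field_simp
  rw [← neg_sub p ζ, div_neg, div_self hpζ]

theorem exp_arcAngle_mul_I (m : Fin 4) :
    exp (arcAngle m * I) = exp ((π / 4 : ℝ) * I) * I ^ (m : ℕ) := by
  have : ((arcAngle m : ℝ) : ℂ) * I = (π / 4 : ℝ) * I + (m : ℕ) * (π / 2 * I) := by
    rw [arcAngle]; push_cast; ring
  rw [this, exp_add, exp_nat_mul, exp_pi_div_two_mul_I]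

theorem inv_sub_inv_sq_add_sq_eq {ω ζ : ℂ} (hζ : ‖ζ‖ < ‖ω‖) :
    ((ζ - ω)⁻¹ - (ζ + ω)⁻¹) ^ 2 + ((ζ - I * ω)⁻¹ - (ζ + I * ω)⁻¹) ^ 2
      = ((ζ - ω)⁻¹ - (ζ - I * ω)⁻¹ + (ζ + ω)⁻¹ - (ζ + I * ω)⁻¹) ^ 2 := by
  have hne : ∀ p : ℂ, ‖p‖ = ‖ω‖ → ζ - p ≠ 0 := fun p hp h => by
    rw [sub_eq_zero.mp h, hp] at hζ; exact hζ.false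
  have h0 := hne ω rfl
  have h1 := hne (I * ω) (by simp)
  have h2 := hne (-ω) (by simp)
  have h3 := hne (-(I * ω)) (by simp)
  rw [sub_neg_eq_add] at h2 h3
  rw [mul_comm I ω] at *
  field_simp
  linear_combination 4 * ω ^ 2 * (ζ ^ 4 - ζ ^ 2 * ω ^ 2 * (1 + I ^ 2) + ω ^ 4 * I ^ 2) * I_sq

theorem quarter_combination_mul_eq (d₀ d₁ d₂ d₃ : ℂ)
    (h : (d₀ - d₂) ^ 2 + (d₁ - d₃) ^ 2 = (d₀ - d₁ + d₂ - d₃) ^ 2) :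
    ((1 - I) * d₀ + (1 + I) * d₁ + (-1 + I) * d₂ + (-1 - I) * d₃)
      * ((1 + I) * d₀ + (1 - I) * d₁ + (-1 - I) * d₂ + (-1 + I) * d₃)
      = 2 * (d₀ - d₁ + d₂ - d₃) ^ 2 := by
  linear_combination 2 * h
    + (2 * (d₀ - d₂) * (d₁ - d₃) - (d₀ - d₂) ^ 2 - (d₁ - d₃) ^ 2) * I_sq

theorem quarter_poles_identity {ζ : ℂ} (hζ : ζ ∈ ball (0:ℂ) 1) :
    (-(I / 2) * ∑ m, ![(1 - I) / π, (1 + I) / π, (-1 + I) / π, (-1 - I) / π] m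
        * (ζ - exp (arcAngle m * I))⁻¹)
      * (-(I / 2) * ∑ m, ![(1 + I) / π, (1 - I) / π, (-1 - I) / π, (-1 + I) / π] m
        * (ζ - exp (arcAngle m * I))⁻¹)
      = (-(I / 2) * ∑ m, ((![√2 / π, -√2 / π, √2 / π, -√2 / π] m : ℝ) : ℂ)
        * (ζ - exp (arcAngle m * I))⁻¹) ^ 2 := by
  simp only [Fin.sum_univ_four, Matrix.cons_val, exp_arcAngle_mul_I, Fin.isValue,
    Fin.coe_ofNat_eq_mod, Nat.reduceMod, pow_zero, pow_one, mul_one]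
  set ω := exp ((π / 4 : ℝ) * I)
  have hI2 : ω * I ^ 2 = -ω := by rw [I_sq]; ring
  have hI3 : ω * I ^ 3 = -(I * ω) := by rw [pow_succ, I_sq]; ring
  rw [hI2, hI3, mul_comm ω I, sub_neg_eq_add, sub_neg_eq_add]
  have hζω : ‖ζ‖ < ‖ω‖ := by rw [norm_exp_ofReal_mul_I]; simpa using hζ
  have key := quarter_combination_mul_eq _ _ _ _ (inv_sub_inv_sq_add_sq_eq hζω)
  have hsqrt : ((√2 : ℝ) : ℂ) ^ 2 = 2 := by
    rw [← ofReal_pow, Real.sq_sqrt zero_le_two, ofReal_ofNat]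
  push_cast
  linear_combination (I ^ 2 / (4 * π ^ 2)) * key - (I ^ 2 / (4 * π ^ 2))
    * ((ζ - ω)⁻¹ - (ζ - I * ω)⁻¹ + (ζ + ω)⁻¹ - (ζ + I * ω)⁻¹) ^ 2 * hsqrt

/-- Conformality relation `(∂_ζ z)(∂_ζ z̄) = (∂_ζ ϑ)²` for
`z = hm_E + i·hm_N − hm_W − i·hm_S` and `ϑ = (√2/2)(hm_E − hm_N + hm_W − hm_S)`,
where `hm_E, hm_N, hm_W, hm_S` are the harmonic measures of the four quarter-arcs
`γ_E = (e^{−iπ/4},e^{iπ/4})`, `γ_N = (e^{iπ/4},e^{3iπ/4})`,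
`γ_W = (e^{3iπ/4},e^{5iπ/4})`, `γ_S = (e^{5iπ/4},e^{7iπ/4})` of the unit disc,
expressed via continuous argument branches `a m` of `arg(e^{iθ_m} − ζ)`. -/
theorem aztec_surface_conformal
    (a : Fin 4 → ℂ → ℝ)
    (hacont : ∀ m, ContinuousOn (a m) (ball 0 1))
    (haarg : ∀ m, ∀ ζ ∈ ball (0:ℂ) 1,
      (‖Complex.exp ((arcAngle m : ℝ) * I) - ζ‖ : ℂ)
          * Complex.exp ((a m ζ : ℝ) * I)
        = Complex.exp ((arcAngle m : ℝ) * I) - ζ)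
    (ha0 : ∀ m, a m 0 = arcAngle m)
    (hmE hmN hmW hmS : ℂ → ℝ)
    (hE : ∀ ζ, hmE ζ = (1 / Real.pi) * (a 0 ζ - (a 3 ζ - 2 * Real.pi)) - 1/4)
    (hN : ∀ ζ, hmN ζ = (1 / Real.pi) * (a 1 ζ - a 0 ζ) - 1/4)
    (hW : ∀ ζ, hmW ζ = (1 / Real.pi) * (a 2 ζ - a 1 ζ) - 1/4)
    (hS : ∀ ζ, hmS ζ = (1 / Real.pi) * (a 3 ζ - a 2 ζ) - 1/4)
    (z : ℂ → ℂ) (ϑ : ℂ → ℝ)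
    (hz : ∀ ζ, z ζ = (hmE ζ : ℝ) + I * (hmN ζ : ℝ) - (hmW ζ : ℝ) - I * (hmS ζ : ℝ))
    (hϑ : ∀ ζ, ϑ ζ = (Real.sqrt 2 / 2) * (hmE ζ - hmN ζ + hmW ζ - hmS ζ)) :
    ∀ ζ ∈ ball (0:ℂ) 1,
      wirt z ζ * wirt (fun w => (starRingEnd ℂ) (z w)) ζ
        = (wirt (fun w => ((ϑ w : ℝ) : ℂ)) ζ) ^ 2 := by
  intro ζ hζ
  set L : Fin 4 → ℂ → ℂ := fun m w => log (1 - w / exp (arcAngle m * I))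
  have ha : ∀ m, ∀ w ∈ ball (0:ℂ) 1, a m w = arcAngle m + (L m w).im := fun m w hw => by
    rw [eqOn_add_arg_one_sub_div (hacont m) (haarg m) (ha0 m) hw, log_im]
  have hL : ∀ m ∈ Finset.univ, HasDerivAt (L m) (ζ - exp (arcAngle m * I))⁻¹ ζ :=
    fun m _ => hasDerivAt_log_one_sub_div (by simpa [norm_exp_ofReal_mul_I] using hζ)
  have hball : ball (0:ℂ) 1 ∈ 𝓝 ζ := isOpen_ball.mem_nhds hζ
  -- the angles `θ_m` contribute `1/4` to every harmonic measure, which cancels in `z` and `ϑ`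
  suffices hrep :
      (z =ᶠ[𝓝 ζ] fun w => ∑ m,
        ![(1 - I) / π, (1 + I) / π, (-1 + I) / π, (-1 - I) / π] m * ((L m w).im : ℂ)) ∧
      ((fun w => (starRingEnd ℂ) (z w)) =ᶠ[𝓝 ζ] fun w => ∑ m,
        ![(1 + I) / π, (1 - I) / π, (-1 - I) / π, (-1 + I) / π] m * ((L m w).im : ℂ)) ∧
      ((fun w => ((ϑ w : ℝ) : ℂ)) =ᶠ[𝓝 ζ] fun w => ∑ m,
        ![√2 / π, -√2 / π, √2 / π, -√2 / π] m * ((L m w).im : ℂ)) by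
    obtain ⟨hz', hzbar', hϑ'⟩ := hrep
    rw [hz'.wirt_eq, hzbar'.wirt_eq, hϑ'.wirt_eq, wirt_sum_ofReal_im _ _ hL,
      wirt_sum_ofReal_im _ _ hL, wirt_sum_ofReal_im _ _ hL]
    exact quarter_poles_identity hζ
  refine ⟨?_, ?_, ?_⟩ <;>
  · filter_upwards [hball] with w hw
    simp only [Fin.sum_univ_four, Matrix.cons_val, hz, hϑ, map_sub, map_add, map_mul, conj_I,
      conj_ofReal, hE, hN, hW, hS, ha _ w hw, arcAngle]
    norm_num
    field_simp
    ring
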